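/- arXiv:1406.7160 — 3 statements merged into one kernel-verified Lean document; each statement's English description precedes it below -/
import Mathlib

section
/- If S1 ⊆ S2 are sub-sigma-algebras and x is a square-integrable random variable with values in a separable Hilbert space, then Cov(E[x|S1], E[x|S1]) ≤ Cov(E[x|S2], E[x|S2]) ≤ Cov(x, x) in the operator order (equivalently, ⟨e, Cov(E[x|S1])e⟩ ≤ ⟨e, Cov(E[x|S2])e⟩ ≤ ⟨e, Cov(x)e⟩ for every e). -/
open MeasureTheory
open scoped RealInnerProductSpace

/-- The covariance quadratic form of a Hilbert-space valued random variable: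
`e ↦ ⟨e, Cov(x) e⟩ = E ⟨x - E x, e⟩²`. -/
noncomputable def covQuad {Ω H : Type*} [MeasurableSpace Ω]
    [NormedAddCommGroup H] [InnerProductSpace ℝ H] [CompleteSpace H]
    (P : Measure Ω) (x : Ω → H) (e : H) : ℝ :=
  ∫ ω, ⟪x ω - ∫ ω', x ω' ∂P, e⟫ ^ 2 ∂P

/-!
Testing against `e` reduces everything to the real random variable `⟪e, x⟫`, since
conditional expectation commutes with the continuous linear functional `⟪e, ·⟫`. For a real
`X ∈ L²`, the law of total variance `E[Var[X|m]] + Var[E[X|m]] = Var[X]` gives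
`Var[E[X|m]] ≤ Var[X]`. This is the second inequality; the first is the same inequality
applied to `E[x|S2]`, because `E[x|S1] = E[E[x|S2]|S1]` by the tower property.
-/

namespace ProbabilityTheory

variable {Ω : Type*} {m m0 : MeasurableSpace Ω} {P : Measure Ω}

lemma variance_condExp_le [IsProbabilityMeasure P] (hm : m ≤ m0) {X : Ω → ℝ}
    (hX : MemLp X 2 P) : Var[P[X|m]; P] ≤ Var[X; P] := by
  have hcondVar_nonneg : 0 ≤ P[Var[X; P | m]] :=
    integral_nonneg_of_ae (condExp_nonneg (ae_of_all _ fun ω => sq_nonneg _))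
  linarith [integral_condVar_add_variance_condExp hm hX]

end ProbabilityTheory

open ProbabilityTheory

section covQuad

variable {Ω H : Type*} {m m0 : MeasurableSpace Ω} {P : Measure Ω}
  [NormedAddCommGroup H] [InnerProductSpace ℝ H] [CompleteSpace H]

lemma covQuad_congr_ae {x y : Ω → H} (hxy : x =ᵐ[P] y) (e : H) :
    covQuad P x e = covQuad P y e := by
  unfold covQuad
  rw [integral_congr_ae hxy]
  exact integral_congr_ae (hxy.mono fun ω hω => by simp only [hω])

lemma covQuad_eq_variance {x : Ω → H} (hx : Integrable x P) (e : H) :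
    covQuad P x e = Var[innerSL ℝ e ∘ x; P] := by
  have hmean : P[innerSL ℝ e ∘ x] = ⟪e, ∫ ω, x ω ∂P⟫ := integral_inner hx e
  have hXm : AEMeasurable (innerSL ℝ e ∘ x) P := ((innerSL ℝ e).integrable_comp hx).aemeasurable
  rw [variance_eq_integral hXm, covQuad, hmean]
  congr 1 with ω
  rw [real_inner_comm, inner_sub_right, Function.comp_apply, coe_innerSL_apply]

lemma covQuad_condExp_le [IsProbabilityMeasure P] (hm : m ≤ m0) {x : Ω → H}
    (hx : MemLp x 2 P) (e : H) : covQuad P (P[x|m]) e ≤ covQuad P x e := by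
  have hxi : Integrable x P := hx.integrable one_le_two
  calc covQuad P (P[x|m]) e
      = Var[innerSL ℝ e ∘ P[x|m]; P] := covQuad_eq_variance integrable_condExp e
    _ = Var[P[innerSL ℝ e ∘ x|m]; P] := variance_congr ((innerSL ℝ e).comp_condExp_comm hxi)
    _ ≤ Var[innerSL ℝ e ∘ x; P] := variance_condExp_le hm ((innerSL ℝ e).comp_memLp' hx)
    _ = covQuad P x e := (covQuad_eq_variance hxi e).symm

end covQuad

theorem covariance_condexp_monotone_general {Ω H : Type*}
    {m1 m2 m0 : MeasurableSpace Ω} (P : @MeasureTheory.Measure Ω m0)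
    [IsProbabilityMeasure P]
    [NormedAddCommGroup H] [InnerProductSpace ℝ H] [CompleteSpace H]
    (h12 : m1 ≤ m2) (h20 : m2 ≤ m0)
    (x : Ω → H) (hx : MemLp x 2 P) :
    ∀ e : H,
      covQuad P (MeasureTheory.condExp m1 P x) e ≤
          covQuad P (MeasureTheory.condExp m2 P x) e ∧
        covQuad P (MeasureTheory.condExp m2 P x) e ≤ covQuad P x e := by
  intro e
  refine ⟨?_, covQuad_condExp_le h20 hx e⟩
  calc covQuad P (P[x|m1]) e
      = covQuad P (P[P[x|m2]|m1]) e := covQuad_congr_ae (condExp_condExp_of_le h12 h20).symm e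
    _ ≤ covQuad P (P[x|m2]) e := covQuad_condExp_le (h12.trans h20) (hx.condExp one_le_two) e

/-- If `S1 ⊆ S2` are sub-sigma-algebras and `x` is square-integrable with
values in a separable Hilbert space, then
`Cov(E[x|S1]) ≤ Cov(E[x|S2]) ≤ Cov(x)` in the operator (Loewner) order, i.e.
the covariance quadratic forms are ordered at every direction `e`. -/
theorem covariance_condexp_monotone {Ω H : Type*}
    {m1 m2 m0 : MeasurableSpace Ω} (P : @MeasureTheory.Measure Ω m0)
    [IsProbabilityMeasure P]
    [NormedAddCommGroup H] [InnerProductSpace ℝ H] [CompleteSpace H]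
    [SecondCountableTopology H]
    (h12 : m1 ≤ m2) (h20 : m2 ≤ m0)
    (x : Ω → H) (hx : MemLp x 2 P) :
    ∀ e : H,
      covQuad P (MeasureTheory.condExp m1 P x) e ≤
          covQuad P (MeasureTheory.condExp m2 P x) e ∧
        covQuad P (MeasureTheory.condExp m2 P x) e ≤ covQuad P x e :=
  covariance_condexp_monotone_general P h12 h20 x hx
end

section
/- Monotonicity of the Riccati difference equation: let P_k^{(1)} and P_k^{(2)} satisfy the Riccati recursions P̃_k^{(j)} = A P_{k−1}^{(j)} A* + W_k^{(j)}, P_k^{(j)} = P̃_k^{(j)} − P̃_k^{(j)} C* (C P̃_k^{(j)} C* + R)⁻¹ C P̃_k^{(j)}. If 0 ≤ P_0^{(1)} ≤ P_0^{(2)} and 0 ≤ W_k^{(1)} ≤ W_k^{(2)} for all k, then P_k^{(1)} ≤ P_k^{(2)} for all k ≥ 0. -/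
open ContinuousLinearMap
open scoped RealInnerProductSpace

/-! Completing the square shows that the quadratic form of the Riccati update is the value of a
least-squares problem: `⟪v, riccatiUpdate C R P v⟫` is the minimum over `u` of
`⟪v - C* u, P (v - C* u)⟫ + ⟪u, R u⟫`, attained at `u₀ = (C P C* + R)⁻¹ C P v`, and the cost at
`u₀ + δ` exceeds it by `⟪δ, (C P C* + R) δ⟫`. The cost is monotone in `P`, hence so is its minimum.
Since `P ↦ A P A* + W` is monotone in `P` and `W` and preserves positivity, induction on `k`
propagates `0 ≤ P_k^{(1)} ≤ P_k^{(2)}`. -/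

/-- The Riccati update map `P̃ ↦ P̃ - P̃ C* (C P̃ C* + R)⁻¹ C P̃`. -/
noncomputable def riccatiUpdate {X : Type*} [NormedAddCommGroup X]
    [InnerProductSpace ℝ X] [CompleteSpace X] {m : ℕ}
    (C : X →L[ℝ] EuclideanSpace ℝ (Fin m))
    (R : EuclideanSpace ℝ (Fin m) →L[ℝ] EuclideanSpace ℝ (Fin m))
    (Pt : X →L[ℝ] X) : X →L[ℝ] X :=
  Pt - Pt ∘L adjoint C ∘L Ring.inverse (C ∘L Pt ∘L adjoint C + R) ∘L C ∘L Pt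

namespace ContinuousLinearMap

section LoewnerOrder

variable {𝕜 E F : Type*} [RCLike 𝕜] [NormedAddCommGroup E] [InnerProductSpace 𝕜 E]
  [NormedAddCommGroup F] [InnerProductSpace 𝕜 F]

instance : IsOrderedAddMonoid (E →L[𝕜] E) where
  add_le_add_left a b hab c := by simpa [le_def] using hab

theorem conj_adjoint_mono [CompleteSpace E] [CompleteSpace F] {T S : E →L[𝕜] E} (h : T ≤ S)
    (A : E →L[𝕜] F) : A ∘L T ∘L adjoint A ≤ A ∘L S ∘L adjoint A := by
  simpa [le_def, comp_sub, sub_comp] using h.conj_adjoint A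

theorem isSelfAdjoint_of_nonneg [CompleteSpace E] {T : E →L[𝕜] E} (h : 0 ≤ T) :
    IsSelfAdjoint T :=
  ((nonneg_iff_isPositive T).1 h).isSelfAdjoint

theorem conj_adjoint_nonneg [CompleteSpace E] [CompleteSpace F] {T : E →L[𝕜] E} (h : 0 ≤ T)
    (A : E →L[𝕜] F) : 0 ≤ A ∘L T ∘L adjoint A := by
  simpa using conj_adjoint_mono h A

end LoewnerOrder

variable {E : Type*} [NormedAddCommGroup E] [InnerProductSpace ℝ E]

theorem inner_apply_nonneg_of_nonneg {T : E →L[ℝ] E} (h : 0 ≤ T) (x : E) : 0 ≤ ⟪x, T x⟫ :=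
  ((nonneg_iff_isPositive T).1 h).inner_nonneg_right x

theorem isUnit_of_inner_pos [FiniteDimensional ℝ E] {T : E →L[ℝ] E}
    (hT : ∀ x, x ≠ 0 → 0 < ⟪x, T x⟫) : IsUnit T := by
  have hinj : Function.Injective T := by
    refine (injective_iff_map_eq_zero T).2 fun x hx => by_contra fun hne => ?_
    simpa [hx] using hT x hne
  exact isUnit_iff_bijective.2 ⟨hinj, LinearMap.injective_iff_surjective.1 hinj⟩

variable [CompleteSpace E]

theorem nonneg_iff_isSelfAdjoint_and_inner_nonneg {T : E →L[ℝ] E} :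
    0 ≤ T ↔ IsSelfAdjoint T ∧ ∀ x, 0 ≤ ⟪x, T x⟫ := by
  simp only [nonneg_iff_isPositive, isPositive_iff', real_inner_comm]

theorem le_iff_inner_le {T S : E →L[ℝ] E} (hT : IsSelfAdjoint T) (hS : IsSelfAdjoint S) :
    T ≤ S ↔ ∀ x, ⟪x, T x⟫ ≤ ⟪x, S x⟫ := by
  simp only [le_def, isPositive_iff', hS.sub hT, true_and, sub_apply, inner_sub_left,
    real_inner_comm, sub_nonneg]

theorem _root_.IsSelfAdjoint.nonneg_of_inner_pos {T : E →L[ℝ] E} (hT : IsSelfAdjoint T)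
    (hpos : ∀ x, x ≠ 0 → 0 < ⟪x, T x⟫) : 0 ≤ T := by
  refine nonneg_iff_isSelfAdjoint_and_inner_nonneg.2 ⟨hT, fun x => ?_⟩
  rcases eq_or_ne x 0 with rfl | hx
  · simp
  · exact (hpos x hx).le

theorem _root_.IsSelfAdjoint.inner_add_map_add {T : E →L[ℝ] E} (hT : IsSelfAdjoint T) (x y : E) :
    ⟪x + y, T (x + y)⟫ = ⟪x, T x⟫ + 2 * ⟪T x, y⟫ + ⟪y, T y⟫ := by
  have hsymm : ⟪x, T y⟫ = ⟪T x, y⟫ := (hT.isSymmetric x y).symm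
  rw [map_add, inner_add_left, inner_add_right, inner_add_right, hsymm, real_inner_comm (T x) y]
  ring

end ContinuousLinearMap

section Riccati

variable {X : Type*} [NormedAddCommGroup X] [InnerProductSpace ℝ X] [CompleteSpace X] {m : ℕ}
  (C : X →L[ℝ] EuclideanSpace ℝ (Fin m))
  (R : EuclideanSpace ℝ (Fin m) →L[ℝ] EuclideanSpace ℝ (Fin m))

noncomputable def riccatiCost (P : X →L[ℝ] X) (v : X) (u : EuclideanSpace ℝ (Fin m)) : ℝ :=
  ⟪v - adjoint C u, P (v - adjoint C u)⟫ + ⟪u, R u⟫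

variable {C R}

-- `hu₀` says that `u₀` is a critical point of `riccatiCost C R P v`.
theorem riccatiCost_of_critical {P : X →L[ℝ] X} {v : X} {u₀ : EuclideanSpace ℝ (Fin m)}
    (hu₀ : R u₀ = C (P (v - adjoint C u₀))) :
    riccatiCost C R P v u₀ = ⟪v, P (v - adjoint C u₀)⟫ := by
  rw [riccatiCost, inner_sub_left, adjoint_inner_left, ← hu₀, sub_add_cancel]

theorem riccatiCost_add_of_critical (hR : IsSelfAdjoint R) {P : X →L[ℝ] X} (hP : IsSelfAdjoint P)
    {v : X} {u₀ : EuclideanSpace ℝ (Fin m)} (hu₀ : R u₀ = C (P (v - adjoint C u₀)))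
    (δ : EuclideanSpace ℝ (Fin m)) :
    riccatiCost C R P v (u₀ + δ) =
      riccatiCost C R P v u₀ + ⟪δ, (C ∘L P ∘L adjoint C + R) δ⟫ := by
  set w := v - adjoint C u₀
  have hw : v - adjoint C (u₀ + δ) = w + -adjoint C δ := by
    rw [map_add, ← sub_eq_add_neg, sub_add_eq_sub_sub]
  have hcross : ⟪P w, adjoint C δ⟫ = ⟪R u₀, δ⟫ := by rw [adjoint_inner_right, hu₀]
  have hquad : ⟪δ, C (P (adjoint C δ))⟫ = ⟪adjoint C δ, P (adjoint C δ)⟫ :=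
    (adjoint_inner_left C _ δ).symm
  simp only [riccatiCost, hw, hP.inner_add_map_add, hR.inner_add_map_add, add_apply, comp_apply,
    inner_add_right, inner_neg_right, inner_neg_left, map_neg, hcross, hquad]
  ring

theorem isLeast_riccatiCost (hR : IsSelfAdjoint R)
    (hRpos : ∀ y : EuclideanSpace ℝ (Fin m), y ≠ 0 → 0 < ⟪y, R y⟫) {P : X →L[ℝ] X} (hP : 0 ≤ P)
    (v : X) : IsLeast (Set.range (riccatiCost C R P v)) ⟪v, riccatiUpdate C R P v⟫ := by
  set S := C ∘L P ∘L adjoint C + R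
  have hPC : 0 ≤ C ∘L P ∘L adjoint C := conj_adjoint_nonneg hP C
  have hS : 0 ≤ S := add_nonneg hPC (hR.nonneg_of_inner_pos hRpos)
  have hS_unit : IsUnit S := isUnit_of_inner_pos fun y hy => by
    rw [add_apply, inner_add_right]
    exact add_pos_of_nonneg_of_pos (inner_apply_nonneg_of_nonneg hPC y) (hRpos y hy)
  set u₀ := Ring.inverse S (C (P v))
  have hu₀ : R u₀ = C (P (v - adjoint C u₀)) := by
    have hSu₀ : S u₀ = C (P v) := by
      simpa using DFunLike.congr_fun (Ring.mul_inverse_cancel S hS_unit) (C (P v))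
    rw [map_sub, map_sub, ← hSu₀]
    simp [S]
  have hmin : riccatiCost C R P v u₀ = ⟪v, riccatiUpdate C R P v⟫ := by
    rw [riccatiCost_of_critical hu₀]
    simp [riccatiUpdate, map_sub, u₀, S]
  refine ⟨⟨u₀, hmin⟩, ?_⟩
  rintro _ ⟨u, rfl⟩
  rw [← add_sub_cancel u₀ u, riccatiCost_add_of_critical hR
    (isSelfAdjoint_of_nonneg hP) hu₀, hmin]
  exact le_add_of_nonneg_right (inner_apply_nonneg_of_nonneg hS _)

theorem isSelfAdjoint_riccatiUpdate (hR : IsSelfAdjoint R) {P : X →L[ℝ] X}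
    (hP : IsSelfAdjoint P) : IsSelfAdjoint (riccatiUpdate C R P) := by
  have hgain := ((hP.conj_adjoint C).add hR).ringInverse.conj_adjoint (P ∘L adjoint C)
  rw [adjoint_comp, adjoint_adjoint, hP.adjoint_eq] at hgain
  exact hP.sub (by simpa only [comp_assoc] using hgain)

theorem riccatiUpdate_nonneg (hR : IsSelfAdjoint R)
    (hRpos : ∀ y : EuclideanSpace ℝ (Fin m), y ≠ 0 → 0 < ⟪y, R y⟫) {P : X →L[ℝ] X} (hP : 0 ≤ P) :
    0 ≤ riccatiUpdate C R P := by
  refine nonneg_iff_isSelfAdjoint_and_inner_nonneg.2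
    ⟨isSelfAdjoint_riccatiUpdate hR (isSelfAdjoint_of_nonneg hP), fun v => ?_⟩
  obtain ⟨u, hu⟩ := (isLeast_riccatiCost hR hRpos hP v).1
  rw [← hu]
  exact add_nonneg (inner_apply_nonneg_of_nonneg hP _)
    (inner_apply_nonneg_of_nonneg (hR.nonneg_of_inner_pos hRpos) u)

theorem riccatiUpdate_mono (hR : IsSelfAdjoint R)
    (hRpos : ∀ y : EuclideanSpace ℝ (Fin m), y ≠ 0 → 0 < ⟪y, R y⟫) {P₁ P₂ : X →L[ℝ] X}
    (hP₁ : 0 ≤ P₁) (h : P₁ ≤ P₂) : riccatiUpdate C R P₁ ≤ riccatiUpdate C R P₂ := by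
  have hP₂ := hP₁.trans h
  have hP₁_sa := isSelfAdjoint_of_nonneg hP₁
  have hP₂_sa := isSelfAdjoint_of_nonneg hP₂
  rw [le_iff_inner_le hP₁_sa hP₂_sa] at h
  rw [le_iff_inner_le (isSelfAdjoint_riccatiUpdate hR hP₁_sa)
    (isSelfAdjoint_riccatiUpdate hR hP₂_sa)]
  intro v
  obtain ⟨u, hu⟩ := (isLeast_riccatiCost hR hRpos hP₂ v).1
  calc ⟪v, riccatiUpdate C R P₁ v⟫ ≤ riccatiCost C R P₁ v u :=
        (isLeast_riccatiCost hR hRpos hP₁ v).2 ⟨u, rfl⟩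
    _ ≤ riccatiCost C R P₂ v u := add_le_add_left (h _) _
    _ = ⟪v, riccatiUpdate C R P₂ v⟫ := hu

end Riccati

/-- Monotonicity of the Riccati difference equation: if two Riccati recursions
`P_k^{(j)} = riccatiUpdate C R (A P_{k-1}^{(j)} A* + W_k^{(j)})` start with
`0 ≤ P_0^{(1)} ≤ P_0^{(2)}` and have `0 ≤ W_k^{(1)} ≤ W_k^{(2)}` for all `k`,
then `P_k^{(1)} ≤ P_k^{(2)}` (Loewner order) for all `k ≥ 0`. -/
theorem riccati_difference_monotone {X : Type*} [NormedAddCommGroup X]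
    [InnerProductSpace ℝ X] [CompleteSpace X] {m : ℕ}
    (A : X →L[ℝ] X) (C : X →L[ℝ] EuclideanSpace ℝ (Fin m))
    (R : EuclideanSpace ℝ (Fin m) →L[ℝ] EuclideanSpace ℝ (Fin m))
    (hRsa : IsSelfAdjoint R)
    (hRpos : ∀ y : EuclideanSpace ℝ (Fin m), y ≠ 0 → 0 < ⟪y, R y⟫)
    (W1 W2 : ℕ → X →L[ℝ] X)
    (hW1sa : ∀ k, IsSelfAdjoint (W1 k)) (hW2sa : ∀ k, IsSelfAdjoint (W2 k))
    (hW1pos : ∀ k (v : X), 0 ≤ ⟪v, W1 k v⟫)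
    (hWle : ∀ k (v : X), ⟪v, W1 k v⟫ ≤ ⟪v, W2 k v⟫)
    (P1 P2 : ℕ → X →L[ℝ] X)
    (hP10sa : IsSelfAdjoint (P1 0)) (hP20sa : IsSelfAdjoint (P2 0))
    (hP10pos : ∀ v : X, 0 ≤ ⟪v, P1 0 v⟫)
    (hP0le : ∀ v : X, ⟪v, P1 0 v⟫ ≤ ⟪v, P2 0 v⟫)
    (hrec1 : ∀ k, P1 (k + 1) = riccatiUpdate C R (A ∘L P1 k ∘L adjoint A + W1 (k + 1)))
    (hrec2 : ∀ k, P2 (k + 1) = riccatiUpdate C R (A ∘L P2 k ∘L adjoint A + W2 (k + 1))) :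
    ∀ k, ∀ v : X, ⟪v, P1 k v⟫ ≤ ⟪v, P2 k v⟫ := by
  have hloewner : ∀ k, 0 ≤ P1 k ∧ P1 k ≤ P2 k := by
    intro k
    induction k with
    | zero =>
      exact ⟨nonneg_iff_isSelfAdjoint_and_inner_nonneg.2 ⟨hP10sa, hP10pos⟩,
        (le_iff_inner_le hP10sa hP20sa).2 hP0le⟩
    | succ k ih =>
      have hW1 : 0 ≤ W1 (k + 1) := nonneg_iff_isSelfAdjoint_and_inner_nonneg.2 ⟨hW1sa _, hW1pos _⟩
      have hW : W1 (k + 1) ≤ W2 (k + 1) := (le_iff_inner_le (hW1sa _) (hW2sa _)).2 (hWle _)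
      have hQ1 : 0 ≤ A ∘L P1 k ∘L adjoint A + W1 (k + 1) :=
        add_nonneg (conj_adjoint_nonneg ih.1 A) hW1
      rw [hrec1, hrec2]
      exact ⟨riccatiUpdate_nonneg hRsa hRpos hQ1,
        riccatiUpdate_mono hRsa hRpos hQ1 (add_le_add (conj_adjoint_mono ih.2 A) hW)⟩
  intro k
  obtain ⟨hP1, hP12⟩ := hloewner k
  exact (le_iff_inner_le (isSelfAdjoint_of_nonneg hP1)
    (isSelfAdjoint_of_nonneg (hP1.trans hP12))).1 hP12
end

section
/- Dominated convergence of traces: if P, S, and P_k (k ∈ ℕ) are positive semidefinite trace-class self-adjoint operators on a separable Hilbert space with P_k ≤ S for all k and P_k → P in the weak operator topology, then tr(P_k) → tr(P). -/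
open Filter ContinuousLinearMap
open scoped RealInnerProductSpace Topology

theorem trace_dominated_convergence_general {X : Type*} [NormedAddCommGroup X]
    [InnerProductSpace ℝ X] [CompleteSpace X]
    (b : HilbertBasis ℕ ℝ X)
    (P S : X →L[ℝ] X) (Pk : ℕ → X →L[ℝ] X)
    (hPkpos : ∀ k (v : X), 0 ≤ ⟪v, Pk k v⟫)
    (hStr : Summable fun n => ⟪b n, S (b n)⟫)
    (hle : ∀ k (v : X), ⟪v, Pk k v⟫ ≤ ⟪v, S v⟫)
    (hweak : ∀ x y : X, Tendsto (fun k => ⟪x, Pk k y⟫) atTop (𝓝 ⟪x, P y⟫)) :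
    Tendsto (fun k => ∑' n, ⟪b n, Pk k (b n)⟫) atTop (𝓝 (∑' n, ⟪b n, P (b n)⟫)) := by
  have diagonal_bound : ∀ k n, ‖⟪b n, Pk k (b n)⟫‖ ≤ ⟪b n, S (b n)⟫ := fun k n => by
    rw [Real.norm_eq_abs, abs_of_nonneg (hPkpos k (b n))]
    exact hle k (b n)
  exact tendsto_tsum_of_dominated_convergence hStr (fun n => hweak (b n) (b n))
    (Eventually.of_forall diagonal_bound)

/-- Dominated convergence of traces: if positive semidefinite trace-class
self-adjoint operators `P_k` satisfy `P_k ≤ S` (Loewner order) for a trace-class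
`S` and `P_k → P` in the weak operator topology, then `tr(P_k) → tr(P)`.
The trace is expressed as the sum of diagonal entries in a Hilbert basis. -/
theorem trace_dominated_convergence {X : Type*} [NormedAddCommGroup X]
    [InnerProductSpace ℝ X] [CompleteSpace X]
    (b : HilbertBasis ℕ ℝ X)
    (P S : X →L[ℝ] X) (Pk : ℕ → X →L[ℝ] X)
    (hPsa : IsSelfAdjoint P) (hSsa : IsSelfAdjoint S)
    (hPksa : ∀ k, IsSelfAdjoint (Pk k))
    (hPpos : ∀ v : X, 0 ≤ ⟪v, P v⟫)
    (hPkpos : ∀ k (v : X), 0 ≤ ⟪v, Pk k v⟫)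
    (hStr : Summable fun n => ⟪b n, S (b n)⟫)
    (hPtr : Summable fun n => ⟪b n, P (b n)⟫)
    (hPktr : ∀ k, Summable fun n => ⟪b n, Pk k (b n)⟫)
    (hle : ∀ k (v : X), ⟪v, Pk k v⟫ ≤ ⟪v, S v⟫)
    (hweak : ∀ x y : X, Tendsto (fun k => ⟪x, Pk k y⟫) atTop (𝓝 ⟪x, P y⟫)) :
    Tendsto (fun k => ∑' n, ⟪b n, Pk k (b n)⟫) atTop (𝓝 (∑' n, ⟪b n, P (b n)⟫)) :=
  trace_dominated_convergence_general b P S Pk hPkpos hStr hle hweak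
end
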